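/- arXiv:1804.00205 — 2 statements merged into one kernel-verified Lean document; each statement's English description precedes it below -/
import Mathlib

section
/- Let p > 1 and q = p/(p−1). Then the Young transform (convex conjugate) of φ_p equals φ_q; that is, for every y ∈ ℝ, sup_{x ∈ ℝ} (x·y − φ_p(x)) = φ_q(y). -/
/-- The standardization `φ_p` of `|x|^p`: `φ_p(x) = x²/2` for `|x| ≤ 1` and
`φ_p(x) = |x|^p/p - 1/p + 1/2` for `|x| > 1`. -/
noncomputable def phi (p : ℝ) (x : ℝ) : ℝ :=
  if |x| ≤ 1 then x ^ 2 / 2 else |x| ^ p / p - 1 / p + 1 / 2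

/-!
Off the unit interval `φ_p` is `|x|^p/p` shifted by `1/2 - 1/p`, and for conjugate exponents these
shifts cancel, so there Young's inequality `xy ≤ |x|^p/p + |y|^q/q`, with equality when
`|x|^p = |y|^q`, transfers verbatim. When `|x| ≤ 1` we use instead that `φ_r` lies above its
tangent line `|t| - 1/2` at `|t| = 1` (Bernoulli's inequality), which gives
`xy ≤ x²/2 + |y| - 1/2 ≤ φ_p(x) + φ_q(y)`; for `|y| ≤ 1` equality is attained at `x = y`.
-/

open Real

lemma phi_of_abs_le_one {p x : ℝ} (hx : |x| ≤ 1) : phi p x = x ^ 2 / 2 := if_pos hx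

lemma phi_of_one_lt_abs {p x : ℝ} (hx : 1 < |x|) : phi p x = |x| ^ p / p - 1 / p + 1 / 2 :=
  if_neg hx.not_ge

lemma abs_sub_half_le_phi {r : ℝ} (hr : 1 ≤ r) (t : ℝ) : |t| - 1 / 2 ≤ phi r t := by
  rcases le_or_gt |t| 1 with ht | ht
  · rw [phi_of_abs_le_one ht, ← sq_abs]
    nlinarith [sq_nonneg (|t| - 1)]
  · have bernoulli : 1 + r * (|t| - 1) ≤ |t| ^ r := by
      simpa using one_add_mul_self_le_rpow_one_add (s := |t| - 1) (by linarith) hr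
    have : |t| - 1 ≤ (|t| ^ r - 1) / r := by
      rw [le_div_iff₀ (by linarith)]
      linarith
    rw [phi_of_one_lt_abs ht, div_sub_div_same]
    linarith

lemma mul_le_phi_add_phi_of_abs_le_one (s : ℝ) {r : ℝ} (hr : 1 ≤ r) {a : ℝ} (ha : |a| ≤ 1)
    (b : ℝ) : a * b ≤ phi s a + phi r b := by
  have hab : a * b ≤ |a| * |b| := (le_abs_self _).trans (abs_mul a b).le
  rw [phi_of_abs_le_one ha, ← sq_abs a]
  rcases le_or_gt |b| 1 with hb | hb
  · rw [phi_of_abs_le_one hb, ← sq_abs b]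
    nlinarith [sq_nonneg (|a| - |b|)]
  · have := abs_sub_half_le_phi hr b
    nlinarith [mul_nonneg (sub_nonneg.2 ha) (sub_nonneg.2 hb.le)]

lemma mul_le_phi_add_phi {p q : ℝ} (hpq : p.HolderConjugate q) (x y : ℝ) :
    x * y ≤ phi p x + phi q y := by
  rcases le_or_gt |x| 1 with hx | hx
  · exact mul_le_phi_add_phi_of_abs_le_one p hpq.symm.lt.le hx y
  rcases le_or_gt |y| 1 with hy | hy
  · rw [mul_comm, add_comm]
    exact mul_le_phi_add_phi_of_abs_le_one q hpq.lt.le hy x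
  rw [phi_of_one_lt_abs hx, phi_of_one_lt_abs hy]
  have := young_inequality x y hpq
  have := hpq.one_div_add_one_div
  linarith

lemma exists_abs_eq_and_mul_eq {a : ℝ} (ha : 0 ≤ a) (y : ℝ) : ∃ x, |x| = a ∧ x * y = a * |y| := by
  rcases le_total 0 y with hy | hy
  · exact ⟨a, abs_of_nonneg ha, by rw [abs_of_nonneg hy]⟩
  · exact ⟨-a, by rw [abs_neg, abs_of_nonneg ha], by rw [abs_of_nonpos hy]; ring⟩

lemma exists_mul_eq_phi_add_phi {p q : ℝ} (hpq : p.HolderConjugate q) (y : ℝ) :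
    ∃ x, x * y = phi p x + phi q y := by
  rcases le_or_gt |y| 1 with hy | hy
  · refine ⟨y, ?_⟩
    rw [phi_of_abs_le_one hy, phi_of_abs_le_one hy]
    ring
  set a := |y| ^ (q - 1)
  have ha : 1 < a := one_lt_rpow hy (by linarith [hpq.symm.lt])
  have hap : a ^ p = |y| ^ q := by
    rw [← rpow_mul (abs_nonneg y), hpq.symm.sub_one_mul_conj]
  obtain ⟨x, hxa, hxy⟩ := exists_abs_eq_and_mul_eq (by linarith : 0 ≤ a) y
  have young_eq : a * |y| = a ^ p / p + |y| ^ q / q :=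
    (young_inequality_eq_iff_of_nonneg (by linarith) (abs_nonneg y) hpq).2 hap
  refine ⟨x, ?_⟩
  rw [phi_of_one_lt_abs (hxa ▸ ha), phi_of_one_lt_abs hy, hxy, hxa, young_eq]
  have := hpq.one_div_add_one_div
  linarith

theorem iSup_mul_sub_phi {p q : ℝ} (hpq : p.HolderConjugate q) (y : ℝ) :
    ⨆ x, x * y - phi p x = phi q y := by
  refine ciSup_eq_of_forall_le_of_forall_lt_exists_gt
    (fun x ↦ sub_le_iff_le_add'.2 (mul_le_phi_add_phi hpq x y)) fun w hw ↦ ?_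
  obtain ⟨x, hx⟩ := exists_mul_eq_phi_add_phi hpq y
  exact ⟨x, by linarith⟩

/-- For `p > 1` and `q = p/(p-1)`, the Young transform (convex conjugate)
of `φ_p` is `φ_q`: for every `y`, `sup_x (x·y - φ_p(x)) = φ_q(y)`. -/
theorem phi_young_conjugate (p : ℝ) (hp : 1 < p) (y : ℝ) :
    (⨆ x : ℝ, x * y - phi p x) = phi (p / (p - 1)) y :=
  iSup_mul_sub_phi (.conjExponent hp) y
end

section
/- Let p > 1, q = p/(p−1) and r = min{2, q}. If ξ_1, …, ξ_n are independent, mean-zero random variables with τ_{φ_p}(ξ_i) < ∞ for each i, then τ_{φ_p}(∑_{i=1}^n ξ_i)^r ≤ ∑_{i=1}^n τ_{φ_p}(ξ_i)^r. -/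
open MeasureTheory ENNReal

/-- `τ_{φ_p}(X) = inf{K > 0 : ∀ t, E exp(tX) ≤ exp(φ_q(Kt))}` where `q = p/(p-1)`
(with value `∞` if no such `K` exists). -/
noncomputable def tauNorm {Ω : Type*} [MeasurableSpace Ω] (μ : Measure Ω) (p : ℝ)
    (X : Ω → ℝ) : ℝ≥0∞ :=
  ⨅ (K : ℝ) (_ : 0 < K)
    (_ : ∀ t : ℝ, ∫⁻ ω, ENNReal.ofReal (Real.exp (t * X ω)) ∂μ ≤
      ENNReal.ofReal (Real.exp (phi (p / (p - 1)) (K * t)))), ENNReal.ofReal K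

/-!
Write `ψ(u) = φ_q(u^{1/r})`. If `E exp(t ξ_i) ≤ exp(φ_q(K_i t))` for independent `ξ_i`, the MGF
of the sum is at most `exp(∑ ψ(|K_i t|^r))`, and superadditivity of `ψ` on `[0, ∞)` bounds this by
`exp(φ_q(K t))` with `K^r = ∑ K_i^r`; letting `K_i ↓ τ(ξ_i)` gives the claim.
Below and above `1`, `ψ` is `u^{2/r}/2` and `u^{q/r}/q - 1/q + 1/2`; because `r = min 2 q`, one
of the exponents `2/r`, `q/r` is `1` and the other is `≥ 1`. Superadditivity then follows by
comparing `a`, `b`, `a + b` with `1`, using Bernoulli's inequality for the power pieces.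
-/

open ProbabilityTheory

lemma phi_abs (q x : ℝ) : phi q |x| = phi q x := by
  simp only [phi, abs_abs, sq_abs]

lemma phi_le_phi {q x y : ℝ} (hq : 0 < q) (hxy : |x| ≤ |y|) : phi q x ≤ phi q y := by
  rw [← phi_abs q x, ← phi_abs q y]
  unfold phi
  simp only [abs_abs]
  split_ifs with hx hy hy
  · gcongr
  · have hx2 : |x| ^ 2 ≤ 1 := pow_le_one₀ (abs_nonneg x) hx
    have hy2 : 0 ≤ (|y| ^ q - 1) / q :=
      div_nonneg (sub_nonneg.2 (Real.one_le_rpow (by linarith) hq.le)) hq.le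
    rw [sub_div] at hy2
    linarith
  · linarith
  · gcongr

lemma phi_rpow_inv_of_le_one {q r u : ℝ} (hr : 0 < r) (hu0 : 0 ≤ u) (hu1 : u ≤ 1) :
    phi q (u ^ (1 / r)) = u ^ (2 / r) / 2 := by
  have hx : |u ^ (1 / r)| ≤ 1 := by
    rw [abs_of_nonneg (by positivity)]; exact Real.rpow_le_one hu0 hu1 (by positivity)
  rw [phi, if_pos hx, ← Real.rpow_mul_natCast hu0]
  norm_num [div_eq_mul_inv, mul_comm]

lemma phi_rpow_inv_of_one_lt {q r u : ℝ} (hr : 0 < r) (hu : 1 < u) :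
    phi q (u ^ (1 / r)) = u ^ (q / r) / q - 1 / q + 1 / 2 := by
  have hx : 1 < |u ^ (1 / r)| := by
    rw [abs_of_nonneg (by positivity)]; exact Real.one_lt_rpow hu (by positivity)
  rw [phi, if_neg hx.not_ge, abs_of_nonneg (by positivity), ← Real.rpow_mul (by positivity)]
  ring_nf

lemma rpow_add_mul_rpow_sub_one_mul_le {β a b : ℝ} (hβ : 1 ≤ β) (ha : 0 ≤ a) (hb : 0 < b) :
    b ^ β + β * b ^ (β - 1) * a ≤ (b + a) ^ β := by
  have hbern := one_add_mul_self_le_rpow_one_add (by linarith [div_nonneg ha hb.le] : -1 ≤ a / b) hβ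
  have hsplit : (b + a) ^ β = b ^ β * (1 + a / b) ^ β := by
    rw [← Real.mul_rpow hb.le (by positivity), mul_one_add, mul_div_cancel₀ a hb.ne']
  have hpow : b ^ (β - 1) = b ^ β / b := by rw [Real.rpow_sub_one hb.ne']
  calc b ^ β + β * b ^ (β - 1) * a = b ^ β * (1 + β * (a / b)) := by
        rw [hpow]; field_simp
    _ ≤ (b + a) ^ β := hsplit ▸ mul_le_mul_of_nonneg_left hbern (by positivity)

lemma phi_rpow_inv_add_le_of_le_two {q a b : ℝ} (hq1 : 1 < q) (hq2 : q ≤ 2) (ha : 0 ≤ a)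
    (hb : 0 ≤ b) : phi q (a ^ (1 / q)) + phi q (b ^ (1 / q)) ≤ phi q ((a + b) ^ (1 / q)) := by
  wlog hab : a ≤ b generalizing a b
  · rw [add_comm a, add_comm (phi q _)]; exact this hb ha (le_of_not_ge hab)
  have hq0 : 0 < q := by linarith
  have hβ : 1 ≤ 2 / q := by rw [le_div_iff₀ hq0]; linarith
  have hhalf : ∀ x, 0 ≤ x → x / 2 ≤ x / q := fun x hx => div_le_div_of_nonneg_left hx hq0 hq2
  have hlin : ∀ u, 1 < u → phi q (u ^ (1 / q)) = u / q - 1 / q + 1 / 2 := fun u hu => by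
    rw [phi_rpow_inv_of_one_lt hq0 hu, div_self hq0.ne', Real.rpow_one]
  rcases le_or_gt b 1 with hb1 | hb1
  · have ha1 := hab.trans hb1
    rw [phi_rpow_inv_of_le_one hq0 ha ha1, phi_rpow_inv_of_le_one hq0 hb hb1]
    rcases le_or_gt (a + b) 1 with hs1 | hs1
    · rw [phi_rpow_inv_of_le_one hq0 (by positivity) hs1]
      linarith [Real.add_rpow_le_rpow_add ha hb hβ]
    · rw [hlin (a + b) hs1]
      have := hhalf (a + b - 1) (by linarith)
      rw [sub_div, sub_div] at this
      linarith [Real.rpow_le_self_of_le_one ha ha1 hβ, Real.rpow_le_self_of_le_one hb hb1 hβ]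
  · rw [hlin b hb1, hlin (a + b) (by linarith), add_div]
    rcases le_or_gt a 1 with ha1 | ha1
    · rw [phi_rpow_inv_of_le_one hq0 ha ha1]
      linarith [Real.rpow_le_self_of_le_one ha ha1 hβ, hhalf a ha]
    · rw [hlin a ha1]
      linarith [hhalf 1 zero_le_one]

lemma phi_rpow_inv_add_le_of_two_le {q a b : ℝ} (hq2 : 2 ≤ q) (ha : 0 ≤ a) (hb : 0 ≤ b) :
    phi q (a ^ (1 / 2 : ℝ)) + phi q (b ^ (1 / 2 : ℝ)) ≤ phi q ((a + b) ^ (1 / 2 : ℝ)) := by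
  wlog hab : a ≤ b generalizing a b
  · rw [add_comm a, add_comm (phi q _)]; exact this hb ha (le_of_not_ge hab)
  have hq0 : 0 < q := by linarith
  have hβ : 1 ≤ q / 2 := by linarith
  have hquad : ∀ u, 0 ≤ u → u ≤ 1 → phi q (u ^ (1 / 2 : ℝ)) = u / 2 := fun u hu0 hu1 => by
    rw [phi_rpow_inv_of_le_one two_pos hu0 hu1, div_self two_ne_zero, Real.rpow_one]
  -- multiplying by `q`, each case becomes an inequality between powers with exponent `q / 2`
  have hscale : ∀ x y : ℝ, x * (q / 2) ≤ y → x / 2 ≤ y / q := fun x y h => by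
    rw [div_le_div_iff₀ two_pos hq0]; nlinarith
  rcases le_or_gt b 1 with hb1 | hb1
  · rw [hquad a ha (hab.trans hb1), hquad b hb hb1]
    rcases le_or_gt (a + b) 1 with hs1 | hs1
    · rw [hquad _ (by positivity) hs1, add_div]
    · rw [phi_rpow_inv_of_one_lt two_pos hs1]
      have hbern := one_add_mul_self_le_rpow_one_add (by linarith : -1 ≤ a + b - 1) hβ
      rw [add_sub_cancel] at hbern
      have := hscale (a + b - 1) ((a + b) ^ (q / 2) - 1) (by linarith)
      rw [sub_div, sub_div] at this
      linarith
  · rw [phi_rpow_inv_of_one_lt two_pos hb1,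
      phi_rpow_inv_of_one_lt (u := a + b) two_pos (by linarith)]
    have htan := rpow_add_mul_rpow_sub_one_mul_le hβ ha (by linarith : (0 : ℝ) < b)
    have hb' : 1 ≤ b ^ (q / 2 - 1) := Real.one_le_rpow hb1.le (by linarith)
    have htan' : q / 2 * a ≤ q / 2 * b ^ (q / 2 - 1) * a := by
      nlinarith [mul_le_mul_of_nonneg_left hb' (by positivity : 0 ≤ q / 2 * a)]
    rcases le_or_gt a 1 with ha1 | ha1
    · rw [hquad a ha ha1]
      have := hscale a ((b + a) ^ (q / 2) - b ^ (q / 2)) (by linarith)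
      rw [sub_div, add_comm b] at this
      linarith
    · rw [phi_rpow_inv_of_one_lt two_pos ha1]
      have hab' : a ^ (q / 2) ≤ b ^ (q / 2 - 1) * a := by
        calc a ^ (q / 2) = a ^ (q / 2 - 1) * a := by
              rw [← Real.rpow_add_one (by linarith), sub_add_cancel]
          _ ≤ b ^ (q / 2 - 1) * a := by gcongr
      have hprod : 1 ≤ b ^ (q / 2 - 1) * a := by nlinarith
      have := hscale 1 ((b + a) ^ (q / 2) - b ^ (q / 2) - a ^ (q / 2) + 1)
        (by nlinarith [mul_le_mul_of_nonneg_left hprod (by linarith : 0 ≤ q / 2 - 1)])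
      simp only [add_comm b, add_div, sub_div] at this
      linarith

lemma phi_rpow_inv_add_le {q r a b : ℝ} (hq : 1 < q) (hr : r = min 2 q) (ha : 0 ≤ a)
    (hb : 0 ≤ b) : phi q (a ^ (1 / r)) + phi q (b ^ (1 / r)) ≤ phi q ((a + b) ^ (1 / r)) := by
  rcases le_total q 2 with hq2 | hq2
  · rw [hr, min_eq_right hq2]; exact phi_rpow_inv_add_le_of_le_two hq hq2 ha hb
  · rw [hr, min_eq_left hq2]; exact phi_rpow_inv_add_le_of_two_le hq2 ha hb

lemma sum_phi_le_phi_of_sum_rpow_le {ι : Type*} {q r c : ℝ} (hq : 1 < q) (hr : r = min 2 q)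
    (s : Finset ι) (x : ι → ℝ) (h : ∑ i ∈ s, |x i| ^ r ≤ |c| ^ r) :
    ∑ i ∈ s, phi q (x i) ≤ phi q c := by
  have hr0 : 0 < r := hr ▸ lt_min two_pos (by linarith)
  set ψ : ℝ → ℝ := fun u => phi q (u ^ (1 / r))
  have hψ : ∀ y, phi q y = ψ (|y| ^ r) := fun y => by
    simp only [ψ, one_div, Real.rpow_rpow_inv (abs_nonneg y) hr0.ne', phi_abs]
  have hsuper : ∑ i ∈ s, ψ (|x i| ^ r) ≤ ψ (∑ i ∈ s, |x i| ^ r) := by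
    have := Finset.le_sum_of_subadditive_on_pred (fun u => -ψ u) (0 ≤ ·)
      (by simp [ψ, phi, hr0.ne'])
      (fun a b ha hb => by linarith [phi_rpow_inv_add_le hq hr ha hb])
      (fun _ _ => add_nonneg) (fun i => |x i| ^ r) (s := s) (fun i _ => by positivity)
    simpa only [Finset.sum_neg_distrib, neg_le_neg_iff] using this
  calc ∑ i ∈ s, phi q (x i) = ∑ i ∈ s, ψ (|x i| ^ r) := Finset.sum_congr rfl fun i _ => hψ (x i)
    _ ≤ ψ (∑ i ∈ s, |x i| ^ r) := hsuper
    _ ≤ phi q c := by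
      refine phi_le_phi (by linarith) ?_
      rw [abs_of_nonneg (by positivity), ← Real.rpow_rpow_inv (abs_nonneg c) hr0.ne', ← one_div]
      exact Real.rpow_le_rpow (by positivity) h (by positivity)

section MGF

variable {Ω : Type*} [MeasurableSpace Ω] {μ : Measure Ω}

/-- `tauNorm μ p X` is the infimum of the `K > 0` with `HasPhiMGFBound μ (p / (p - 1)) X K`. -/
def HasPhiMGFBound (μ : Measure Ω) (q : ℝ) (X : Ω → ℝ) (K : ℝ) : Prop :=
  ∀ t : ℝ, ∫⁻ ω, ENNReal.ofReal (Real.exp (t * X ω)) ∂μ ≤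
    ENNReal.ofReal (Real.exp (phi q (K * t)))

lemma HasPhiMGFBound.mono {q K K' : ℝ} {X : Ω → ℝ} (h : HasPhiMGFBound μ q X K) (hq : 0 < q)
    (hK : |K| ≤ |K'|) : HasPhiMGFBound μ q X K' := fun t =>
  (h t).trans <| ENNReal.ofReal_le_ofReal <| Real.exp_le_exp.2 <|
    phi_le_phi hq (by rw [abs_mul, abs_mul]; gcongr)

lemma ProbabilityTheory.iIndepFun.hasPhiMGFBound_sum {ι : Type*} {q r : ℝ} (hq : 1 < q)
    (hr : r = min 2 q) {ξ : ι → Ω → ℝ} (hmeas : ∀ i, Measurable (ξ i)) (hindep : iIndepFun ξ μ)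
    {s : Finset ι} {K : ι → ℝ} (hK : ∀ i ∈ s, HasPhiMGFBound μ q (ξ i) (K i)) {K₀ : ℝ}
    (hK₀ : ∑ i ∈ s, |K i| ^ r ≤ |K₀| ^ r) :
    HasPhiMGFBound μ q (fun ω => ∑ i ∈ s, ξ i ω) K₀ := by
  intro t
  have hexp : ∀ x : ι → ℝ,
      ENNReal.ofReal (Real.exp (∑ i ∈ s, x i)) = ∏ i ∈ s, ENNReal.ofReal (Real.exp (x i)) :=
    fun x => by rw [Real.exp_sum, ENNReal.ofReal_prod_of_nonneg fun i _ => (Real.exp_pos _).le]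
  have hphi : ∑ i ∈ s, phi q (K i * t) ≤ phi q (K₀ * t) := by
    refine sum_phi_le_phi_of_sum_rpow_le hq hr s _ ?_
    have hr0 : 0 ≤ r := hr ▸ le_min zero_le_two (by linarith)
    simp_rw [abs_mul, Real.mul_rpow (abs_nonneg _) (abs_nonneg _), ← Finset.sum_mul]
    gcongr
  calc ∫⁻ ω, ENNReal.ofReal (Real.exp (t * ∑ i ∈ s, ξ i ω)) ∂μ
      = ∏ i ∈ s, ∫⁻ ω, ENNReal.ofReal (Real.exp (t * ξ i ω)) ∂μ := by
        simp_rw [Finset.mul_sum, hexp]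
        exact lintegral_prod_eq_prod_lintegral_of_indepFun s _
          (hindep.comp (fun _ x => ENNReal.ofReal (Real.exp (t * x))) fun _ => by fun_prop)
          fun i => by fun_prop
    _ ≤ ∏ i ∈ s, ENNReal.ofReal (Real.exp (phi q (K i * t))) :=
        Finset.prod_le_prod' fun i hi => hK i hi t
    _ = ENNReal.ofReal (Real.exp (∑ i ∈ s, phi q (K i * t))) := (hexp _).symm
    _ ≤ ENNReal.ofReal (Real.exp (phi q (K₀ * t))) := by gcongr

lemma hasPhiMGFBound_of_tauNorm_lt {p K : ℝ} {X : Ω → ℝ} (hp : 1 < p)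
    (h : tauNorm μ p X < ENNReal.ofReal K) : HasPhiMGFBound μ (p / (p - 1)) X K := by
  simp only [tauNorm, iInf_lt_iff] at h
  obtain ⟨K', hK'0, hK', hlt⟩ := h
  have hKK' : K' < K := (ENNReal.ofReal_lt_ofReal_iff_of_nonneg hK'0.le).1 hlt
  exact HasPhiMGFBound.mono hK' (div_pos (by linarith) (by linarith))
    ((abs_of_pos hK'0).trans_le (hKK'.le.trans (le_abs_self K)))

lemma tauNorm_le_ofReal {p K : ℝ} {X : Ω → ℝ} (hp : 1 < p) (hK : 0 ≤ K)
    (h : HasPhiMGFBound μ (p / (p - 1)) X K) : tauNorm μ p X ≤ ENNReal.ofReal K := by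
  refine ENNReal.le_of_forall_pos_le_add fun ε hε _ => ?_
  have hKε : 0 < K + ε := by positivity
  have hbound : HasPhiMGFBound μ (p / (p - 1)) X (K + ε) :=
    h.mono (div_pos (by linarith) (by linarith))
      (by rw [abs_of_nonneg hK, abs_of_pos hKε]; linarith [ε.coe_nonneg])
  calc tauNorm μ p X ≤ ENNReal.ofReal (K + ε) := iInf₂_le_of_le (K + ε) hKε (iInf_le _ hbound)
    _ = ENNReal.ofReal K + ε := by
      rw [ENNReal.ofReal_add hK ε.coe_nonneg, ENNReal.ofReal_coe_nnreal]

lemma tauNorm_sum_le_of_lt {ι : Type*} {p r : ℝ} (hp : 1 < p) (hr : r = min 2 (p / (p - 1)))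
    {ξ : ι → Ω → ℝ} (hmeas : ∀ i, Measurable (ξ i)) (hindep : iIndepFun ξ μ) {s : Finset ι}
    {K : ι → ℝ} (hK : ∀ i ∈ s, tauNorm μ p (ξ i) < ENNReal.ofReal (K i)) :
    tauNorm μ p (fun ω => ∑ i ∈ s, ξ i ω) ≤
      ENNReal.ofReal ((∑ i ∈ s, |K i| ^ r) ^ (1 / r)) := by
  have hr0 : 0 < r := hr ▸ lt_min two_pos (div_pos (by linarith) (by linarith))
  have hsum : 0 ≤ ∑ i ∈ s, |K i| ^ r := by positivity
  refine tauNorm_le_ofReal hp (by positivity) (hindep.hasPhiMGFBound_sum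
    ((one_lt_div (by linarith)).2 (by linarith)) hr hmeas
    (fun i hi => hasPhiMGFBound_of_tauNorm_lt hp (hK i hi)) ?_)
  rw [abs_of_nonneg (by positivity), one_div, Real.rpow_inv_rpow hsum hr0.ne']

end MGF

lemma ENNReal.ofReal_rpow_sum_rpow_inv {ι : Type*} {r : ℝ} (hr : 0 < r) (s : Finset ι)
    (x : ι → ℝ) :
    ENNReal.ofReal ((∑ i ∈ s, |x i| ^ r) ^ (1 / r)) ^ r = ∑ i ∈ s, ENNReal.ofReal |x i| ^ r := by
  rw [ENNReal.ofReal_rpow_of_nonneg (by positivity) hr.le, one_div,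
    Real.rpow_inv_rpow (by positivity) hr.ne',
    ENNReal.ofReal_sum_of_nonneg fun i _ => by positivity]
  exact Finset.sum_congr rfl fun i _ =>
    (ENNReal.ofReal_rpow_of_nonneg (abs_nonneg _) hr.le).symm

theorem tauNorm_sum_le_general {Ω : Type*} [MeasurableSpace Ω] (μ : Measure Ω)
    (p q r : ℝ) (hp : 1 < p) (hq : q = p / (p - 1)) (hr : r = min 2 q)
    (n : ℕ) (ξ : Fin n → Ω → ℝ) (hmeas : ∀ i, Measurable (ξ i))
    (hindep : ProbabilityTheory.iIndepFun ξ μ)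
    (hfin : ∀ i, tauNorm μ p (ξ i) < ⊤) :
    (tauNorm μ p (fun ω => ∑ i, ξ i ω)) ^ r ≤ ∑ i, (tauNorm μ p (ξ i)) ^ r := by
  subst hq
  have hr0 : 0 < r := hr ▸ lt_min two_pos (div_pos (by linarith) (by linarith))
  set T : Fin n → ℝ := fun i => (tauNorm μ p (ξ i)).toReal
  have hT : ∀ i, ENNReal.ofReal |T i| = tauNorm μ p (ξ i) := fun i => by
    rw [abs_of_nonneg ENNReal.toReal_nonneg, ENNReal.ofReal_toReal (hfin i).ne]
  have hbound : ∀ δ > 0, tauNorm μ p (fun ω => ∑ i, ξ i ω) ≤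
      ENNReal.ofReal ((∑ i, |T i + δ| ^ r) ^ (1 / r)) := fun δ hδ =>
    tauNorm_sum_le_of_lt hp hr hmeas hindep fun i _ => by
      rw [← hT i, abs_of_nonneg ENNReal.toReal_nonneg]
      exact (ENNReal.ofReal_lt_ofReal_iff (by positivity)).2 (by linarith)
  have hcont : Continuous fun δ => ENNReal.ofReal ((∑ i, |T i + δ| ^ r) ^ (1 / r)) :=
    ENNReal.continuous_ofReal.comp (by fun_prop (disch := positivity))
  have hlim : tauNorm μ p (fun ω => ∑ i, ξ i ω) ≤
      ENNReal.ofReal ((∑ i, |T i + 0| ^ r) ^ (1 / r)) :=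
    ge_of_tendsto ((hcont.tendsto 0).mono_left nhdsWithin_le_nhds)
      (eventually_nhdsWithin_of_forall (s := Set.Ioi 0) hbound)
  calc (tauNorm μ p (fun ω => ∑ i, ξ i ω)) ^ r
      ≤ ENNReal.ofReal ((∑ i, |T i + 0| ^ r) ^ (1 / r)) ^ r := by gcongr
    _ = ∑ i, (tauNorm μ p (ξ i)) ^ r := by
      simp_rw [add_zero, ENNReal.ofReal_rpow_sum_rpow_inv hr0, hT]

/-- For `p > 1`, `q = p/(p-1)`, `r = min{2, q}` and independent mean-zero
random variables `ξ_1, …, ξ_n` with finite `τ_{φ_p}`-norms,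
`τ_{φ_p}(∑ ξ_i)^r ≤ ∑ τ_{φ_p}(ξ_i)^r`. -/
theorem tauNorm_sum_le {Ω : Type*} [MeasurableSpace Ω] (μ : Measure Ω) [IsProbabilityMeasure μ]
    (p q r : ℝ) (hp : 1 < p) (hq : q = p / (p - 1)) (hr : r = min 2 q)
    (n : ℕ) (ξ : Fin n → Ω → ℝ) (hmeas : ∀ i, Measurable (ξ i))
    (hindep : ProbabilityTheory.iIndepFun ξ μ)
    (hint : ∀ i, Integrable (ξ i) μ) (hmean : ∀ i, ∫ ω, ξ i ω ∂μ = 0)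
    (hfin : ∀ i, tauNorm μ p (ξ i) < ⊤) :
    (tauNorm μ p (fun ω => ∑ i, ξ i ω)) ^ r ≤ ∑ i, (tauNorm μ p (ξ i)) ^ r :=
  tauNorm_sum_le_general μ p q r hp hq hr n ξ hmeas hindep hfin
end
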